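/- arXiv:1104.0226 — 2 statements merged into one kernel-verified Lean document; each statement's English description precedes it below -/
import Mathlib

section
/- Let $A$ be a finite-dimensional self-injective algebra over an algebraically closed field $k$, let $P = Ae$ be an indecomposable projective left ideal for a primitive idempotent $e$, and let $u$ be a nonzero element of the socle of $P$ (so $Au$ is the simple socle of $P$). If $M$ is a finite-dimensional $A$-module with $uM \neq 0$, then $M$ has a direct summand isomorphic to $P$. -/
/-!
The map `P → M`, `x ↦ x • m` for some `m` with `u • m ≠ 0`, is injective: its kernel, if
nonzero, would contain a simple submodule of `P` (as `A` is artinian), i.e. `Au`, which it does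
not. Since `P = Ae` is projective, hence injective by self-injectivity, the embedding splits.
-/

theorem disjoint_of_forall_isAtom_le_not_le {α : Type*} [Lattice α] [OrderBot α] [IsAtomic α]
    {a b : α} (h : ∀ x, IsAtom x → x ≤ a → ¬x ≤ b) : Disjoint a b := by
  rw [disjoint_iff]
  by_contra hab
  obtain ⟨x, hx, hxab⟩ := (eq_bot_or_exists_atom_le (a ⊓ b)).resolve_left hab
  exact h x hx (hxab.trans inf_le_left) (hxab.trans inf_le_right)

namespace Submodule

variable {R X M : Type*} [Ring R] [AddCommGroup X] [Module R X] [AddCommGroup M] [Module R M]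

theorem projective_span_singleton_of_isIdempotentElem {e : R} (he : IsIdempotentElem e) :
    Module.Projective R (span R {e}) := by
  have hmul_mem (a : R) : a * e ∈ span R {e} := mem_span_singleton.2 ⟨a, rfl⟩
  refine .of_split (span R {e}).subtype
    (LinearMap.codRestrict _ (LinearMap.toSpanSingleton R R e) hmul_mem) ?_
  ext ⟨x, hx⟩
  obtain ⟨a, rfl⟩ := mem_span_singleton.1 hx
  change a * e * e = a * e
  rw [mul_assoc, he.eq]

theorem disjoint_ker_of_forall_isSimpleModule_eq_span [IsAtomic (Submodule R X)]
    {P : Submodule R X} {x : X}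
    (hsoc : ∀ N : Submodule R X, N ≤ P → IsSimpleModule R N → N = span R {x})
    {f : X →ₗ[R] M} (hfx : f x ≠ 0) : Disjoint P (LinearMap.ker f) := by
  refine disjoint_of_forall_isAtom_le_not_le fun N hN hNP hNker => hfx ?_
  rw [hsoc N hNP (isSimpleModule_iff_isAtom.2 hN)] at hNker
  exact hNker (mem_span_singleton_self x)

end Submodule

universe v in
theorem LinearMap.exists_isCompl_range_of_injective {R M : Type*} {Q : Type v} [Ring R]
    [Small.{v} R] [AddCommGroup Q] [Module R Q] [Module.Injective R Q]
    [AddCommGroup M] [Module R M] (f : Q →ₗ[R] M) (hf : Function.Injective f) :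
    ∃ N : Submodule R M, IsCompl (range f) N := by
  obtain ⟨g, hg⟩ := Module.Injective.extension_property R Q Q M f hf LinearMap.id
  refine ⟨ker ((LinearEquiv.ofInjective f hf).toLinearMap ∘ₗ g), isCompl_of_proj ?_⟩
  rintro ⟨_, y, rfl⟩
  ext
  simp [← LinearMap.comp_apply g f, hg]

theorem summand_of_socle_smul_ne_zero_general
    {k A : Type} [Field k] [Ring A] [Algebra k A]
    [FiniteDimensional k A]
    -- `A` is self-injective: projective and injective `A`-modules coincide
    (self_inj : ∀ (N : Type) [AddCommGroup N] [Module A N],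
      Module.Projective A N ↔ Module.Injective A N)
    (e : A) (he : IsIdempotentElem e)
    (u : A)
    -- `Au` is simple and is the socle of `P`:
    -- every simple submodule of `P` equals `Au`
    (hsoc : ∀ N : Submodule A A, N ≤ Submodule.span A ({e} : Set A) →
      IsSimpleModule A ↥N → N = Submodule.span A ({u} : Set A))
    (M : Type) [AddCommGroup M] [Module A M]
    -- `uM ≠ 0`
    (huM : ∃ m : M, u • m ≠ 0) :
    ∃ (N N' : Submodule A M), IsCompl N N' ∧
      Nonempty (↥N ≃ₗ[A] ↥(Submodule.span A ({e} : Set A))) := by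
  obtain ⟨m, hm⟩ := huM
  have : IsArtinianRing A := IsArtinianRing.of_finite k A
  have : Module.Injective A (Submodule.span A {e}) :=
    (self_inj _).1 (Submodule.projective_span_singleton_of_isIdempotentElem he)
  let f := (LinearMap.toSpanSingleton A M m).domRestrict (Submodule.span A {e})
  have hf : Function.Injective f := LinearMap.injective_domRestrict_iff.2
    (Submodule.disjoint_ker_of_forall_isSimpleModule_eq_span hsoc hm)
  obtain ⟨N', hN'⟩ := f.exists_isCompl_range_of_injective hf
  exact ⟨LinearMap.range f, N', hN', ⟨(LinearEquiv.ofInjective f hf).symm⟩⟩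

theorem summand_of_socle_smul_ne_zero
    {k A : Type} [Field k] [IsAlgClosed k] [Ring A] [Algebra k A]
    [FiniteDimensional k A]
    -- `A` is self-injective: projective and injective `A`-modules coincide
    (self_inj : ∀ (N : Type) [AddCommGroup N] [Module A N],
      Module.Projective A N ↔ Module.Injective A N)
    (e : A) (he : IsIdempotentElem e)
    -- `e` is a primitive idempotent (so `P = Ae` is indecomposable projective)
    (hprim : e ≠ 0)
    (hprim' : ∀ a b : A, IsIdempotentElem a → IsIdempotentElem b →
      a * b = 0 → b * a = 0 → a + b = e → a = 0 ∨ b = 0)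
    (u : A) (hu0 : u ≠ 0)
    -- `u` lies in `P = Ae`
    (huP : u ∈ Submodule.span A ({e} : Set A))
    -- `Au` is simple and is the socle of `P`:
    -- every simple submodule of `P` equals `Au`
    (husimple : IsSimpleModule A ↥(Submodule.span A ({u} : Set A)))
    (hsoc : ∀ N : Submodule A A, N ≤ Submodule.span A ({e} : Set A) →
      IsSimpleModule A ↥N → N = Submodule.span A ({u} : Set A))
    (M : Type) [AddCommGroup M] [Module A M] [Module k M]
    [IsScalarTower k A M] [FiniteDimensional k M]
    -- `uM ≠ 0`
    (huM : ∃ m : M, u • m ≠ 0) :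
    ∃ (N N' : Submodule A M), IsCompl N N' ∧
      Nonempty (↥N ≃ₗ[A] ↥(Submodule.span A ({e} : Set A))) :=
  summand_of_socle_smul_ne_zero_general (k := k) self_inj e he u hsoc M huM
end

section
/- Let $A$ be a finite-dimensional $k$-algebra generated by elements $a_1,\dots,a_t$, let $n \geq 1$, and let $\mathcal{V}_n$ be the affine variety of $n$-dimensional representations of $A$ (points are $t$-tuples of $n\times n$ matrices satisfying the defining relations of $A$). Fix a finite-dimensional $A$-module $M$, an indecomposable projective $A$-module $P$ over a self-injective cocommutative Hopf algebra $A$, and an integer $s \geq 0$. Then the set $\mathcal{W}$ of representations $\sigma \in \mathcal{V}_n$ such that $M \otimes L_\sigma$ contains no submodule isomorphic to $P^{\oplus s}$ is Zariski-closed in $\mathcal{V}_n$. -/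
/-!
STATEMENT 15: Let `A` be a finite-dimensional self-injective cocommutative Hopf
`k`-algebra generated by `a_1, …, a_t`, let `n ≥ 1`, and let `𝒱_n` be the
variety of `n`-dimensional representations of `A` (tuples of `n × n` matrices
satisfying the defining relations of `A`).  Fix a finite-dimensional
`A`-module `M`, an indecomposable projective `A`-module `P`, and `s ≥ 0`.
Then the set of representations `σ ∈ 𝒱_n` such that `M ⊗ L_σ` contains no
submodule isomorphic to `P^{⊕ s}` is Zariski-closed in `𝒱_n`.
-/

open TensorProduct

section EndoTrivInfra

variable {k : Type} [CommRing k] {A : Type} [Ring A] [HopfAlgebra k A]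
variable {V W : Type} [AddCommGroup V] [Module k V] [AddCommGroup W] [Module k W]

/-- The representation of `A` on `V ⊗ W` obtained from representations on `V` and
`W` via the comultiplication of the Hopf algebra `A` (diagonal action). -/
noncomputable def tensorRep (ρ : A →ₗ[k] Module.End k V) (σ : A →ₗ[k] Module.End k W) :
    A →ₗ[k] Module.End k (V ⊗[k] W) :=
  (TensorProduct.lift ((TensorProduct.mapBilinear (RingHom.id k) V W V W).compl₁₂ ρ σ)).comp
    (Coalgebra.comul (R := k) (A := A))

/-- The contragredient (dual) representation, via the antipode. -/
noncomputable def dualRep (ρ : A →ₗ[k] Module.End k V) :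
    A →ₗ[k] Module.End k (Module.Dual k V) :=
  (Module.Dual.transpose (R := k)).comp (ρ.comp (HopfAlgebra.antipode (R := k)))

/-- Conjugation `(f, g) ↦ (h ↦ f ∘ h ∘ g)` as a bilinear map. -/
noncomputable def conjBil :
    Module.End k V →ₗ[k] Module.End k V →ₗ[k] Module.End k (V →ₗ[k] V) :=
  LinearMap.mk₂ k (fun f g => (LinearMap.llcomp k V V V f).comp (LinearMap.lcomp k V g))
    (by intros f f' g; ext h v; simp)
    (by intros c f g; ext h v; simp)
    (by intros f g g'; ext h v; simp [map_add])
    (by intros c f g; ext h v; simp [map_smul])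

/-- The representation of `A` on `Hom_k(V, V)` given by
`a • f = Σ ρ(a₁) ∘ f ∘ ρ(S(a₂))` (comultiplication and antipode). -/
noncomputable def homRep (ρ : A →ₗ[k] Module.End k V) :
    A →ₗ[k] Module.End k (V →ₗ[k] V) :=
  (TensorProduct.lift (conjBil.compl₁₂ ρ (ρ.comp (HopfAlgebra.antipode (R := k))))).comp
    (Coalgebra.comul (R := k) (A := A))

/-- The trivial (one-dimensional) representation, via the counit. -/
noncomputable def trivialRep : A →ₗ[k] Module.End k k :=
  (Coalgebra.counit (R := k) (A := A)).smulRight (LinearMap.id : k →ₗ[k] k)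

/-- Direct sum of two representations. -/
noncomputable def prodRep (ρ : A →ₗ[k] Module.End k V) (σ : A →ₗ[k] Module.End k W) :
    A →ₗ[k] Module.End k (V × W) :=
  (LinearMap.prodMapLinear k V W V W k).comp (ρ.prod σ)

/-- Isomorphism of representations. -/
def RepIso (ρ : A →ₗ[k] Module.End k V) (σ : A →ₗ[k] Module.End k W) : Prop :=
  ∃ e : V ≃ₗ[k] W, ∀ (a : A) (v : V), e (ρ a v) = σ a (e v)

/-- An algebra-homomorphism representation (i.e. an honest module structure)
is projective if the corresponding module is projective. -/
def RepProjective {P : Type} [AddCommGroup P] [Module k P]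
    (τ : A →ₐ[k] Module.End k P) : Prop :=
  letI : Module A P := Module.compHom P τ.toRingHom
  Module.Projective A P

/-- `ρ` is an endotrivial representation: `Hom_k(V,V) ≅ k ⊕ (projective)` as
`A`-modules, where `Hom_k(V,V)` carries the action `homRep ρ` and `k` is
trivial via the counit. -/
noncomputable def IsEndotrivialRep (ρ : A →ₗ[k] Module.End k V) : Prop :=
  ∃ (m : ℕ) (τ : A →ₐ[k] Module.End k (Fin m → k)),
    RepProjective τ ∧
    ∃ e : (V →ₗ[k] V) ≃ₗ[k] k × (Fin m → k),
      ∀ (a : A) (f : V →ₗ[k] V),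
        e (homRep ρ a f) = (Coalgebra.counit a * (e f).1, τ a ((e f).2))

end EndoTrivInfra

/-- Zariski-closed subsets of affine space `ι → k`: common zero sets of
families of polynomials. -/
def IsZariskiClosed {k ι : Type} [CommSemiring k] (s : Set (ι → k)) : Prop :=
  ∃ T : Set (MvPolynomial ι k),
    s = {x | ∀ p ∈ T, MvPolynomial.eval x p = 0}

/-- The coordinates of a tuple of matrices, as a point of affine space. -/
def matCoords {k : Type} (t n : ℕ) (σ : Fin t → Matrix (Fin n) (Fin n) k) :
    Fin t × Fin n × Fin n → k :=
  fun x => σ x.1 x.2.1 x.2.2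

/-
Since `P` is injective and indecomposable, any two nonzero submodules of `P` meet, so some
`v ≠ 0` lies in every nonzero submodule. Then an `A`-linear map out of `P` is injective as soon as
it does not kill `v`, and, `k` being algebraically closed, every endomorphism of `P` maps `v` to a
multiple of `v`. Since `P` is injective, copies of `P` split off one at a time, and `P ^ s`
embeds in `N` iff `{f v | f : P → N}` has dimension at least `s`. As `P` is projective it embeds
in `A` by some `f`, and that space is `u N` for `u = f v`. The matrix of `u` on `M ⊗ L_σ` has
entries polynomial in `σ` (split the coproduct of `u` and lift its tensor factors to the free
algebra on the generators), so the locus where `P ^ s` does not embed is cut out by minors.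
-/

open Module

section Socle

variable {A P : Type} [Ring A] [AddCommGroup P] [Module A P]

lemma Submodule.eq_bot_or_eq_bot_of_disjoint [IsArtinian A P] [IsNoetherian A P]
    [Module.Injective A P] (hind : ∀ N N' : Submodule A P, IsCompl N N' → N = ⊥ ∨ N' = ⊥)
    {S S' : Submodule A P} (h : Disjoint S S') : S = ⊥ ∨ S' = ⊥ := by
  -- Extend `S → P ⧸ S'` to `H : P → P`, the identity on `S` and zero on `S'`;
  -- the Fitting decomposition of `H` then splits `P`.
  have hg : Function.Injective (S'.mkQ ∘ₗ S.subtype) := by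
    rw [← LinearMap.ker_eq_bot, LinearMap.ker_comp, Submodule.ker_mkQ]
    exact disjoint_iff_comap_eq_bot.mp h
  obtain ⟨h', hh'⟩ := Module.Injective.out _ hg S.subtype
  set H := h' ∘ₗ S'.mkQ
  obtain ⟨m, hm, hm1⟩ := (H.eventually_isCompl_ker_pow_range_pow.and
    (Filter.eventually_ge_atTop 1)).exists
  refine (hind _ _ hm).symm.imp (fun hrange => ?_) (fun hker => ?_)
  · rw [eq_bot_iff, ← hrange]
    intro x hx
    have hfix : (H ^ m) x = x := by
      rw [Module.End.pow_apply]
      exact Function.iterate_fixed (hh' ⟨x, hx⟩) m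
    exact hfix ▸ LinearMap.mem_range_self _ x
  · rw [eq_bot_iff, ← hker]
    intro x hx
    obtain ⟨m, rfl⟩ := Nat.exists_eq_add_of_le' hm1
    simp [pow_succ, Module.End.mul_apply, H, (Submodule.Quotient.mk_eq_zero S').2 hx]

variable (A) in
def IsSocleVector (v : P) : Prop :=
  v ≠ 0 ∧ ∀ K : Submodule A P, K ≠ ⊥ → v ∈ K

lemma exists_isSocleVector [IsArtinian A P] [IsNoetherian A P] [Module.Injective A P]
    [Nontrivial P] (hind : ∀ N N' : Submodule A P, IsCompl N N' → N = ⊥ ∨ N' = ⊥) :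
    ∃ v : P, IsSocleVector A v := by
  obtain ⟨S, hS⟩ := IsAtomic.exists_atom (Submodule A P)
  obtain ⟨v, hvS, hv0⟩ := (Submodule.ne_bot_iff S).1 hS.1
  refine ⟨v, hv0, fun K hK => ?_⟩
  obtain ⟨S', hS', hS'K⟩ := (eq_bot_or_exists_atom_le K).resolve_left hK
  have hSS' : S = S' := by
    by_contra hne
    exact (Submodule.eq_bot_or_eq_bot_of_disjoint hind
      (IsAtom.disjoint_of_ne hS hS' hne)).elim hS.1 hS'.1
  exact hS'K (hSS' ▸ hvS)

lemma IsSocleVector.injective_of_apply_ne_zero {v : P} (hv : IsSocleVector A v) {N : Type}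
    [AddCommGroup N] [Module A N] {f : P →ₗ[A] N} (hf : f v ≠ 0) : Function.Injective f := by
  rw [← LinearMap.ker_eq_bot]
  by_contra hker
  exact hf (hv.2 _ hker)

end Socle

section Criterion

variable {k A P N : Type} [Field k] [Ring A] [Algebra k A] [AddCommGroup P] [Module A P]
  [AddCommGroup N] [Module k N] [Module A N] [IsScalarTower k A N]

variable (k A N) in
def evalRange (v : P) : Submodule k N :=
  LinearMap.range (LinearMap.applyₗ' (R := A) (M₂ := N) k v)

@[simp]
lemma mem_evalRange {v : P} {x : N} : x ∈ evalRange k A N v ↔ ∃ f : P →ₗ[A] N, f v = x :=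
  Iff.rfl

namespace IsSocleVector

variable {v : P} (hv : IsSocleVector A v)
include hv

lemma exists_range_toLinearMap_eq_evalRange [Module.Projective A P] [Module.Injective A P] :
    ∃ u : A, ∀ (N : Type) [AddCommGroup N] [Module k N] [Module A N] [IsScalarTower k A N],
      LinearMap.range (DistribSMul.toLinearMap k N u) = evalRange k A N v := by
  -- `u = f v` for an embedding `f : P → A` with retraction `pr`:
  -- then `u • y = (y ∘ f) v` and `g v = u • g (pr 1)`.
  obtain ⟨sec, hsec⟩ := Module.projective_def'.1 ‹Module.Projective A P›
  have hsecv : sec v ≠ 0 := fun h => hv.1 <| by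
    simpa [h] using (LinearMap.congr_fun hsec v).symm
  obtain ⟨i, hi⟩ := Finsupp.ne_iff.1 hsecv
  set f : P →ₗ[A] A := Finsupp.lapply i ∘ₗ sec
  obtain ⟨pr, hpr⟩ := Module.Injective.out f (hv.injective_of_apply_ne_zero (f := f) hi)
    LinearMap.id
  refine ⟨f v, fun N _ _ _ _ => le_antisymm ?_ ?_⟩
  · rintro _ ⟨y, rfl⟩
    exact ⟨LinearMap.toSpanSingleton A N y ∘ₗ f, by simp⟩
  · rintro _ ⟨g, rfl⟩
    refine ⟨g (pr 1), ?_⟩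
    simpa [← map_smul] using congrArg g (hpr v)

variable [Module k P] [IsScalarTower k A P]

lemma le_finrank_evalRange [FiniteDimensional k N] {s : ℕ} {Φ : (Fin s → P) →ₗ[A] N}
    (hΦ : Function.Injective Φ) : s ≤ finrank k (evalRange k A N v) := by
  set L : (Fin s → k) →ₗ[k] N :=
    Φ.restrictScalars k ∘ₗ LinearMap.compLeft (LinearMap.toSpanSingleton k P v) (Fin s)
  have hL : Function.Injective L :=
    hΦ.comp ((smul_left_injective k hv.1).comp_left)
  have hrange : LinearMap.range L ≤ evalRange k A N v := by
    rintro _ ⟨c, rfl⟩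
    exact ⟨Φ ∘ₗ LinearMap.pi fun j => c j • LinearMap.id, rfl⟩
  simpa [LinearMap.finrank_range_of_inj hL] using Submodule.finrank_mono hrange

variable [IsAlgClosed k] [FiniteDimensional k P]

lemma exists_apply_eq_smul (r : P →ₗ[A] P) : ∃ c : k, r v = c • v := by
  -- an eigenspace of `r` is a nonzero submodule, so it contains `v`
  have : Nontrivial P := ⟨⟨v, 0, hv.1⟩⟩
  obtain ⟨c, hc⟩ := Module.End.exists_eigenvalue (r.restrictScalars k)
  obtain ⟨w, hw⟩ := hc.exists_hasEigenvector
  have hmem := hv.2 (LinearMap.ker (r - c • LinearMap.id)) <|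
    (Submodule.ne_bot_iff _).2 ⟨w, by simpa [sub_eq_zero] using hw.apply_eq_smul, hw.2⟩
  exact ⟨c, by simpa [sub_eq_zero] using hmem⟩

lemma finrank_evalRange_le_succ [FiniteDimensional k N] {q : P →ₗ[A] N} {π : N →ₗ[A] P}
    (hπ : ∀ x, π (q x) = x) :
    finrank k (evalRange k A N v) ≤ finrank k (evalRange k A (LinearMap.ker π) v) + 1 := by
  have : FiniteDimensional k (LinearMap.ker π) :=
    .of_injective ((LinearMap.ker π).subtype.restrictScalars k) Subtype.val_injective
  have hle : evalRange k A N v ≤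
      Submodule.map ((LinearMap.ker π).subtype.restrictScalars k)
        (evalRange k A (LinearMap.ker π) v) ⊔ Submodule.span k {q v} := by
    rintro _ ⟨f, rfl⟩
    obtain ⟨c, hc⟩ := hv.exists_apply_eq_smul (k := k) (π ∘ₗ f)
    -- `f = (f - q ∘ π ∘ f) + q ∘ π ∘ f`, the first summand landing in `ker π`
    have hker : ∀ x, f x - q (π (f x)) ∈ LinearMap.ker π := fun x => by simp [hπ]
    refine Submodule.mem_sup.2 ⟨_, Submodule.mem_map_of_mem
      (mem_evalRange.2 ⟨(f - q ∘ₗ π ∘ₗ f).codRestrict _ hker, rfl⟩),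
      c • q v, Submodule.smul_mem _ c (Submodule.mem_span_singleton_self _), ?_⟩
    rw [LinearMap.comp_apply] at hc
    simp [hc, LinearMap.map_smul_of_tower]
  refine (Submodule.finrank_mono hle).trans <|
    (Submodule.finrank_add_le_finrank_add_finrank _ _).trans ?_
  exact add_le_add (Submodule.finrank_map_le _ _) (finrank_span_le_card _)

lemma exists_injective_of_le_finrank [Module.Injective A P] {s : ℕ} [FiniteDimensional k N]
    (hs : s ≤ finrank k (evalRange k A N v)) :
    ∃ Φ : (Fin s → P) →ₗ[A] N, Function.Injective Φ := by
  induction s generalizing N with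
  | zero => exact ⟨0, Function.injective_of_subsingleton _⟩
  | succ s ih =>
    obtain ⟨_, ⟨q, rfl⟩, hqv⟩ := Submodule.exists_mem_ne_zero_of_ne_bot <|
      Submodule.one_le_finrank_iff.1 (le_of_add_le_right hs)
    obtain ⟨π, hπ⟩ := Module.Injective.out q (hv.injective_of_apply_ne_zero hqv) LinearMap.id
    have : FiniteDimensional k (LinearMap.ker π) :=
      .of_injective ((LinearMap.ker π).subtype.restrictScalars k) Subtype.val_injective
    obtain ⟨ψ, hψ⟩ := ih (N := LinearMap.ker π) <|
      Nat.le_of_succ_le_succ (hs.trans (hv.finrank_evalRange_le_succ hπ))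
    have hinj : Function.Injective (q.coprod ((LinearMap.ker π).subtype ∘ₗ ψ)) := by
      rw [← LinearMap.ker_eq_bot, eq_bot_iff]
      rintro ⟨p, x⟩ hpx
      have hp : p = 0 := by simpa [hπ] using congrArg π hpx
      subst hp
      simp only [LinearMap.mem_ker, LinearMap.coprod_apply, map_zero, zero_add,
        LinearMap.comp_apply, Submodule.subtype_apply, ZeroMemClass.coe_eq_zero] at hpx
      simpa using hψ (hpx.trans (map_zero ψ).symm)
    exact ⟨q.coprod ((LinearMap.ker π).subtype ∘ₗ ψ) ∘ₗ
      (Fin.consLinearEquiv A fun _ => P).symm.toLinearMap,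
      hinj.comp (Fin.consLinearEquiv A fun _ => P).symm.injective⟩

theorem exists_forall_exists_injective_iff [Module.Projective A P] [Module.Injective A P] :
    ∃ u : A, ∀ (N : Type) [AddCommGroup N] [Module k N] [Module A N] [IsScalarTower k A N]
      [FiniteDimensional k N] (s : ℕ),
        (∃ Φ : (Fin s → P) →ₗ[A] N, Function.Injective Φ) ↔
        s ≤ finrank k (LinearMap.range (DistribSMul.toLinearMap k N u)) := by
  obtain ⟨u, hu⟩ := hv.exists_range_toLinearMap_eq_evalRange (k := k)
  refine ⟨u, fun N _ _ _ _ _ s => ?_⟩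
  rw [hu]
  exact ⟨fun ⟨_, hΦ⟩ => hv.le_finrank_evalRange hΦ, hv.exists_injective_of_le_finrank⟩

end IsSocleVector

variable [Module k P] [IsScalarTower k A P]

/-- The rank of `u` on `P` is the `t₀` of the paper. -/
theorem exists_forall_exists_injective_iff_mul_le [IsAlgClosed k] [FiniteDimensional k P]
    [Module.Projective A P] [Module.Injective A P]
    (hind : ∀ N N' : Submodule A P, IsCompl N N' → N = ⊥ ∨ N' = ⊥) :
    ∃ u : A, ∀ (N : Type) [AddCommGroup N] [Module k N] [Module A N] [IsScalarTower k A N]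
      [FiniteDimensional k N] (s : ℕ),
        (∃ Φ : (Fin s → P) →ₗ[A] N, Function.Injective Φ) ↔
        s * finrank k (LinearMap.range (DistribSMul.toLinearMap k P u)) ≤
          finrank k (LinearMap.range (DistribSMul.toLinearMap k N u)) := by
  rcases subsingleton_or_nontrivial P with _ | _
  · refine ⟨0, fun N _ _ _ _ _ s => ?_⟩
    simp only [finrank_zero_of_subsingleton, mul_zero, zero_le, iff_true]
    exact ⟨0, Function.injective_of_subsingleton _⟩
  have : IsArtinian A P := isArtinian_of_tower k inferInstance
  have : IsNoetherian A P := isNoetherian_of_tower k inferInstance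
  obtain ⟨v, hv⟩ := exists_isSocleVector hind
  obtain ⟨u, hu⟩ := hv.exists_forall_exists_injective_iff (k := k)
  have hP1 : finrank k (LinearMap.range (DistribSMul.toLinearMap k P u)) = 1 := by
    -- `P` embeds in itself, `P ^ 2` does not
    refine le_antisymm (Nat.le_of_lt_succ (lt_of_not_ge fun h2 => ?_)) ((hu P 1).1 ?_)
    · obtain ⟨Φ, hΦ⟩ := (hu P 2).2 h2
      have := LinearMap.finrank_le_finrank_of_injective (f := Φ.restrictScalars k) hΦ
      rw [finrank_pi_fintype] at this
      simp only [Finset.sum_const, Finset.card_univ, Fintype.card_fin, smul_eq_mul] at this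
      have := finrank_pos (R := k) (M := P)
      omega
    · exact ⟨LinearMap.proj 0, fun x y h => funext fun i => Subsingleton.elim i 0 ▸ h⟩
  exact ⟨u, fun N _ _ _ _ _ s => by rw [hu, hP1, mul_one]⟩

end Criterion

section MatrixRank

variable {K m n : Type} [Field K] [Fintype m] [Fintype n]

lemma exists_linearIndependent_comp_of_le_finrank {ι V : Type} [AddCommGroup V] [Module K V]
    [FiniteDimensional K V] (v : ι → V) {r : ℕ}
    (h : r ≤ finrank K (Submodule.span K (Set.range v))) :
    ∃ g : Fin r → ι, LinearIndependent K (v ∘ g) := by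
  obtain ⟨κ, a, -, hspan, hli⟩ := exists_linearIndependent' K v
  have := hli.finite
  have := Fintype.ofFinite κ
  rw [← hspan, finrank_span_eq_card hli] at h
  obtain ⟨e⟩ := Function.Embedding.nonempty_of_card_le (α := Fin r) (by simpa using h)
  exact ⟨a ∘ e, hli.comp e e.injective⟩

lemma Matrix.rank_lt_iff_forall_det_submatrix_eq_zero (M : Matrix m n K) (r : ℕ) :
    M.rank < r ↔ ∀ (f : Fin r → m) (g : Fin r → n), (M.submatrix f g).det = 0 := by
  refine ⟨fun h f g => by_contra fun hdet => ?_, fun h => lt_of_not_ge fun hr => ?_⟩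
  · have hsub := Matrix.rank_of_det_ne_zero hdet
    rw [Fintype.card_fin] at hsub
    exact (hsub ▸ M.rank_submatrix_le f g).not_gt h
  · rw [Matrix.rank_eq_finrank_span_cols] at hr
    obtain ⟨g, hg⟩ := exists_linearIndependent_comp_of_le_finrank M.col hr
    have hB : r ≤ (M.submatrix id g).rank := by
      rw [Matrix.rank_eq_finrank_span_cols]
      exact (finrank_span_eq_card hg).ge.trans' (by simp)
    rw [Matrix.rank_eq_finrank_span_row] at hB
    obtain ⟨f, hf⟩ := exists_linearIndependent_comp_of_le_finrank _ hB
    have := Matrix.linearIndependent_rows_iff_isUnit.1 hf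
    exact ((Matrix.isUnit_iff_isUnit_det _).1 this).ne_zero (h f g)

lemma LinearMap.rank_toMatrix_eq_finrank_range {R M₁ M₂ ι₁ ι₂ : Type} [CommRing R]
    [StrongRankCondition R] [AddCommGroup M₁] [Module R M₁] [AddCommGroup M₂] [Module R M₂]
    [Fintype ι₁] [DecidableEq ι₁] [Fintype ι₂] (b₁ : Module.Basis ι₁ R M₁)
    (b₂ : Module.Basis ι₂ R M₂) (f : M₁ →ₗ[R] M₂) :
    (LinearMap.toMatrix b₁ b₂ f).rank = finrank R (LinearMap.range f) := by
  rw [Matrix.rank_eq_finrank_range_toLin _ b₂ b₁, Matrix.toLin_toMatrix]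

end MatrixRank

lemma isZariskiClosed_setOf_rank_lt {k ι m n : Type} [Field k] [Fintype m] [Fintype n]
    (p : Matrix m n (MvPolynomial ι k)) (r : ℕ) :
    IsZariskiClosed {x | (p.map (MvPolynomial.eval x)).rank < r} := by
  refine ⟨Set.range fun fg : (Fin r → m) × (Fin r → n) => (p.submatrix fg.1 fg.2).det, ?_⟩
  ext x
  simp only [Set.mem_ofPred_eq, Set.forall_mem_range, Prod.forall, RingHom.map_det,
    RingHom.mapMatrix_apply, Matrix.submatrix_map, Matrix.rank_lt_iff_forall_det_submatrix_eq_zero]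

section Generators

variable {k A B ι : Type} [CommRing k] [Ring A] [Algebra k A] [Ring B] [Algebra k B]
  {gen : ι → A}

lemma FreeAlgebra.lift_surjective_of_adjoin_eq_top (hgen : Algebra.adjoin k (Set.range gen) = ⊤) :
    Function.Surjective (FreeAlgebra.lift k gen) := by
  rwa [← AlgHom.range_eq_top, ← Algebra.adjoin_range_eq_range_freeAlgebra_lift]

lemma exists_algHom_apply_eq_of_adjoin_eq_top (hgen : Algebra.adjoin k (Set.range gen) = ⊤)
    (g : FreeAlgebra k ι →ₐ[k] B) (hg : ∀ x, FreeAlgebra.lift k gen x = 0 → g x = 0) :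
    ∃ ρ : A →ₐ[k] B, ∀ i, ρ (gen i) = g (FreeAlgebra.ι k i) := by
  set e := Ideal.quotientKerAlgEquivOfSurjective (FreeAlgebra.lift_surjective_of_adjoin_eq_top hgen)
  refine ⟨(Ideal.Quotient.liftₐ (RingHom.ker (FreeAlgebra.lift k gen)) g
    fun x hx => hg x hx).comp (e.symm : A →ₐ[k] _), fun i => ?_⟩
  have : e.symm (gen i) = Ideal.Quotient.mk _ (FreeAlgebra.ι k i) :=
    e.symm_apply_eq.2 (by simp [e])
  rw [AlgHom.comp_apply, AlgEquiv.coe_toAlgHom, this]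
  rfl

end Generators

section RepresentationVariety

variable {k A : Type} [CommRing k] [Ring A] [Algebra k A] {t n : ℕ} {gen : Fin t → A}

lemma exists_toMatrix'_eq_map_eval (hgen : Algebra.adjoin k (Set.range gen) = ⊤) (a : A) :
    ∃ p : Matrix (Fin n) (Fin n) (MvPolynomial (Fin t × Fin n × Fin n) k),
      ∀ (σ : Fin t → Matrix (Fin n) (Fin n) k) (ρ : A →ₐ[k] Module.End k (Fin n → k)),
        (∀ i, ρ (gen i) = (σ i).mulVecLin) →
          LinearMap.toMatrix' (ρ a) = p.map (MvPolynomial.eval (matCoords t n σ)) := by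
  obtain ⟨z, rfl⟩ := FreeAlgebra.lift_surjective_of_adjoin_eq_top hgen a
  set X : Fin t → Matrix (Fin n) (Fin n) (MvPolynomial (Fin t × Fin n × Fin n) k) :=
    fun i => Matrix.of fun α β => MvPolynomial.X (i, α, β)
  refine ⟨FreeAlgebra.lift k X z, fun σ ρ hρ => ?_⟩
  have key : (LinearMap.toMatrixAlgEquiv' : _ ≃ₐ[k] Matrix (Fin n) (Fin n) k).toAlgHom.comp
      (ρ.comp (FreeAlgebra.lift k gen)) =
      (MvPolynomial.aeval (matCoords t n σ)).mapMatrix.comp (FreeAlgebra.lift k X) := by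
    ext i α β
    simp [hρ, X, matCoords]
  exact (by simpa [MvPolynomial.coe_aeval_eq_eval] using DFunLike.congr_fun key z :
    LinearMap.toMatrixAlgEquiv' _ = _)

end RepresentationVariety

section TensorRepresentation

open scoped Kronecker

variable {k A V W : Type} [CommRing k] [Ring A] [Bialgebra k A]
  [AddCommGroup V] [Module k V] [AddCommGroup W] [Module k W]

noncomputable def repTensor (ρ : A →ₐ[k] Module.End k V) (σ : A →ₐ[k] Module.End k W) :
    A →ₐ[k] Module.End k (V ⊗[k] W) :=
  (Module.endTensorEndAlgHom.comp (Algebra.TensorProduct.map ρ σ)).comp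
    (Bialgebra.comulAlgHom k A)

lemma toMatrix_repTensor {ι κ : Type} [Fintype ι] [DecidableEq ι] [Fintype κ] [DecidableEq κ]
    (bV : Module.Basis ι k V) (bW : Module.Basis κ k W)
    (ρ : A →ₐ[k] Module.End k V) (σ : A →ₐ[k] Module.End k W)
    {a : A} {S : Finset (A × A)} (hS : Coalgebra.comul (R := k) a = ∑ r ∈ S, r.1 ⊗ₜ r.2) :
    LinearMap.toMatrix (bV.tensorProduct bW) (bV.tensorProduct bW) (repTensor ρ σ a) =
      ∑ r ∈ S, LinearMap.toMatrix bV bV (ρ r.1) ⊗ₖ LinearMap.toMatrix bW bW (σ r.2) := by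
  simp [repTensor, Bialgebra.comulAlgHom_apply, hS, map_sum, Module.endTensorEndAlgHom_apply,
    TensorProduct.AlgebraTensorModule.map_eq, TensorProduct.toMatrix_map]

lemma exists_toMatrix_repTensor_eq_map_eval {t n : ℕ} {gen : Fin t → A}
    (hgen : Algebra.adjoin k (Set.range gen) = ⊤) {ι : Type} [Fintype ι] [DecidableEq ι]
    (bV : Module.Basis ι k V) (ρV : A →ₐ[k] Module.End k V) (u : A) :
    ∃ p : Matrix (ι × Fin n) (ι × Fin n) (MvPolynomial (Fin t × Fin n × Fin n) k),
      ∀ (σ : Fin t → Matrix (Fin n) (Fin n) k) (ρ : A →ₐ[k] Module.End k (Fin n → k)),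
        (∀ i, ρ (gen i) = (σ i).mulVecLin) →
          LinearMap.toMatrix (bV.tensorProduct (Pi.basisFun k (Fin n)))
            (bV.tensorProduct (Pi.basisFun k (Fin n))) (repTensor ρV ρ u) =
              p.map (MvPolynomial.eval (matCoords t n σ)) := by
  obtain ⟨S, hS⟩ := TensorProduct.exists_finset (Coalgebra.comul (R := k) u)
  choose q hq using fun b : A => exists_toMatrix'_eq_map_eval (n := n) hgen b
  refine ⟨∑ r ∈ S, (LinearMap.toMatrix bV bV (ρV r.1)).map MvPolynomial.C ⊗ₖ q r.2,
    fun σ ρ hρ => ?_⟩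
  rw [toMatrix_repTensor _ _ _ _ hS]
  simp_rw [LinearMap.toMatrix_eq_toMatrix', hq _ σ ρ hρ]
  ext
  simp [Matrix.sum_apply, Matrix.kroneckerMap_apply]

end TensorRepresentation

lemma tensorRep_eq_repTensor {k A V W : Type} [CommRing k] [Ring A] [HopfAlgebra k A]
    [AddCommGroup V] [Module k V] [AddCommGroup W] [Module k W]
    (ρ : A →ₐ[k] Module.End k V) (σ : A →ₐ[k] Module.End k W) (a : A) :
    tensorRep ρ.toLinearMap σ.toLinearMap a = repTensor ρ σ a := by
  obtain ⟨S, hS⟩ := TensorProduct.exists_finset (Coalgebra.comul (R := k) a)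
  simp [tensorRep, repTensor, hS, Bialgebra.comulAlgHom_apply, map_sum,
    Module.endTensorEndAlgHom_apply, TensorProduct.AlgebraTensorModule.map_eq]

section Intertwiners

variable {k A : Type} [CommSemiring k] [Semiring A] [Algebra k A]

lemma isScalarTower_compHom {V : Type} [AddCommMonoid V] [Module k V]
    (ρ : A →ₐ[k] Module.End k V) :
    letI := Module.compHom V ρ.toRingHom
    IsScalarTower k A V :=
  letI := Module.compHom V ρ.toRingHom
  ⟨fun c a v => by
    change ρ (c • a) v = c • ρ a v
    rw [map_smul]
    rfl⟩

lemma exists_injective_intertwiner_iff {X W : Type} [AddCommMonoid X] [Module k X] [Module A X]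
    [IsScalarTower k A X] [AddCommMonoid W] [Module k W] (ρ : A →ₐ[k] Module.End k W) :
    (∃ φ : X →ₗ[k] W, Function.Injective φ ∧ ∀ a x, φ (a • x) = ρ a (φ x)) ↔
      letI := Module.compHom W ρ.toRingHom
      ∃ Φ : X →ₗ[A] W, Function.Injective Φ := by
  let _ := Module.compHom W ρ.toRingHom
  have := isScalarTower_compHom ρ
  exact ⟨fun ⟨φ, hφ, hφA⟩ => ⟨{ φ with map_smul' := hφA }, hφ⟩,
    fun ⟨Φ, hΦ⟩ => ⟨Φ.restrictScalars k, hΦ, Φ.map_smul⟩⟩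

end Intertwiners

theorem no_projective_submodule_is_closed_general
    (k : Type) [Field k] [IsAlgClosed k]
    (A : Type) [Ring A] [HopfAlgebra k A]
    -- `A` is cocommutative and self-injective
    (self_inj : ∀ (N : Type) [AddCommGroup N] [Module A N],
      Module.Projective A N ↔ Module.Injective A N)
    -- a fixed finite generating set `a_1, …, a_t` of `A`
    (t : ℕ) (gen : Fin t → A) (hgen : Algebra.adjoin k (Set.range gen) = ⊤)
    (n : ℕ)
    -- the fixed module `M`
    (VM : Type) [AddCommGroup VM] [Module k VM] [FiniteDimensional k VM]
    (ρM : A →ₐ[k] Module.End k VM)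
    -- the indecomposable projective module `P`
    (VP : Type) [AddCommGroup VP] [Module k VP] [FiniteDimensional k VP]
    (τP : A →ₐ[k] Module.End k VP) (hPproj : RepProjective τP)
    (hPind : letI : Module A VP := Module.compHom VP τP.toRingHom;
      ∀ N N' : Submodule A VP, IsCompl N N' → N = ⊥ ∨ N' = ⊥)
    (s : ℕ) :
    -- `𝒱_n`: tuples of matrices satisfying the defining relations of `A`
    ∀ Vn : Set (Fin t → Matrix (Fin n) (Fin n) k),
      Vn = {σ | ∀ x : FreeAlgebra k (Fin t),
        FreeAlgebra.lift k gen x = 0 →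
          FreeAlgebra.lift k (fun i => (σ i).mulVecLin) x = 0} →
    -- `𝒲`: the locus where `M ⊗ L_σ` has no submodule isomorphic to `P^{⊕ s}`
    ∀ W : Set (Fin t → Matrix (Fin n) (Fin n) k),
      W = {σ | σ ∈ Vn ∧ ∀ ρσ : A →ₐ[k] Module.End k (Fin n → k),
        (∀ i, ρσ (gen i) = (σ i).mulVecLin) →
          ¬ ∃ φ : (Fin s → VP) →ₗ[k] VM ⊗[k] (Fin n → k),
            Function.Injective φ ∧
              ∀ (a : A) (x : Fin s → VP),
                φ (fun j => τP a (x j)) =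
                  tensorRep ρM.toLinearMap ρσ.toLinearMap a (φ x)} →
    ∃ C : Set (Fin t × Fin n × Fin n → k),
      IsZariskiClosed C ∧ W = Vn ∩ {σ | matCoords t n σ ∈ C} := by
  intro Vn hVn W hW
  let _ : Module A VP := Module.compHom VP τP.toRingHom
  have := isScalarTower_compHom τP
  have : Module.Projective A VP := hPproj
  have : Module.Injective A VP := (self_inj VP).1 hPproj
  obtain ⟨u, hu⟩ := exists_forall_exists_injective_iff_mul_le (k := k) hPind
  obtain ⟨p, hp⟩ :=
    exists_toMatrix_repTensor_eq_map_eval (n := n) hgen (Module.finBasis k VM) ρM u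
  refine ⟨_, isZariskiClosed_setOf_rank_lt p
    (s * finrank k (LinearMap.range (DistribSMul.toLinearMap k VP u))), ?_⟩
  subst hVn hW
  ext σ
  refine and_congr_right fun hσ => ?_
  obtain ⟨ρ, hρ⟩ := exists_algHom_apply_eq_of_adjoin_eq_top hgen _ hσ
  simp only [FreeAlgebra.lift_ι_apply] at hρ
  let _ : Module A (VM ⊗[k] (Fin n → k)) := Module.compHom _ (repTensor ρM ρ).toRingHom
  have := isScalarTower_compHom (repTensor ρM ρ)
  have key : (∃ φ : (Fin s → VP) →ₗ[k] VM ⊗[k] (Fin n → k), Function.Injective φ ∧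
      ∀ (a : A) (x : Fin s → VP),
        φ (fun j => τP a (x j)) = tensorRep ρM.toLinearMap ρ.toLinearMap a (φ x)) ↔
      s * finrank k (LinearMap.range (DistribSMul.toLinearMap k VP u)) ≤
        (p.map (MvPolynomial.eval (matCoords t n σ))).rank := by
    simp_rw [tensorRep_eq_repTensor, ← hp σ ρ hρ, LinearMap.rank_toMatrix_eq_finrank_range]
    exact (exists_injective_intertwiner_iff _).trans (hu _ s)
  refine ⟨fun h => lt_of_not_ge fun hle => h ρ hρ (key.2 hle), fun h ρ' hρ' => ?_⟩
  rw [AlgHom.ext_of_adjoin_eq_top (φ₁ := ρ') (φ₂ := ρ) hgen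
    fun _ ⟨i, hi⟩ => hi ▸ (hρ' i).trans (hρ i).symm]
  exact fun hex => (key.1 hex).not_gt h

theorem no_projective_submodule_is_closed
    (k : Type) [Field k] [IsAlgClosed k]
    (A : Type) [Ring A] [HopfAlgebra k A] [FiniteDimensional k A]
    -- `A` is cocommutative and self-injective
    (hcc : ∀ a : A, (TensorProduct.comm k A A) (Coalgebra.comul a) = Coalgebra.comul a)
    (self_inj : ∀ (N : Type) [AddCommGroup N] [Module A N],
      Module.Projective A N ↔ Module.Injective A N)
    -- a fixed finite generating set `a_1, …, a_t` of `A`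
    (t : ℕ) (gen : Fin t → A) (hgen : Algebra.adjoin k (Set.range gen) = ⊤)
    (n : ℕ) (hn : 1 ≤ n)
    -- the fixed module `M`
    (VM : Type) [AddCommGroup VM] [Module k VM] [FiniteDimensional k VM]
    (ρM : A →ₐ[k] Module.End k VM)
    -- the indecomposable projective module `P`
    (VP : Type) [AddCommGroup VP] [Module k VP] [FiniteDimensional k VP]
    (τP : A →ₐ[k] Module.End k VP) (hPproj : RepProjective τP)
    (hPind : letI : Module A VP := Module.compHom VP τP.toRingHom;
      ∀ N N' : Submodule A VP, IsCompl N N' → N = ⊥ ∨ N' = ⊥)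
    (s : ℕ) :
    -- `𝒱_n`: tuples of matrices satisfying the defining relations of `A`
    ∀ Vn : Set (Fin t → Matrix (Fin n) (Fin n) k),
      Vn = {σ | ∀ x : FreeAlgebra k (Fin t),
        FreeAlgebra.lift k gen x = 0 →
          FreeAlgebra.lift k (fun i => (σ i).mulVecLin) x = 0} →
    -- `𝒲`: the locus where `M ⊗ L_σ` has no submodule isomorphic to `P^{⊕ s}`
    ∀ W : Set (Fin t → Matrix (Fin n) (Fin n) k),
      W = {σ | σ ∈ Vn ∧ ∀ ρσ : A →ₐ[k] Module.End k (Fin n → k),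
        (∀ i, ρσ (gen i) = (σ i).mulVecLin) →
          ¬ ∃ φ : (Fin s → VP) →ₗ[k] VM ⊗[k] (Fin n → k),
            Function.Injective φ ∧
              ∀ (a : A) (x : Fin s → VP),
                φ (fun j => τP a (x j)) =
                  tensorRep ρM.toLinearMap ρσ.toLinearMap a (φ x)} →
    ∃ C : Set (Fin t × Fin n × Fin n → k),
      IsZariskiClosed C ∧ W = Vn ∩ {σ | matCoords t n σ ∈ C} :=
  no_projective_submodule_is_closed_general k A self_inj t gen hgen n VM ρM VP τP hPproj hPind s
end
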